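/- arXiv:1603.02648 — 7 statements merged into one kernel-verified Lean document; each statement's English description precedes it below -/
import Mathlib

section
/- Let V : ℝ → Mat_{n×n}(ℝ) be continuous, let λ ∈ ℝ, and let α₁, α₂ be real n×n matrices such that α₁ᵗv = 0 and α₂ᵗv = 0 together imply v = 0 (i.e. the n×2n matrix [α₁ α₂] has rank n). Suppose X, Z : [0,1] → Mat_{n×n}(ℝ) are differentiable and satisfy X′(s) = Z(s) and Z′(s) = (V(s) − λIₙ)X(s) for all s ∈ [0,1], with X(0) = α₂ᵗ and Z(0) = −α₁ᵗ. Then for every s ∈ [0,1] and v ∈ ℝⁿ, if X(s)v = 0 and Z(s)v = 0 then v = 0; i.e. the 2n×n frame (X(s); Z(s)) has rank n for every s. -/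
open Matrix
open Set

/-! Fix `v` and put `y t = (X t; Z t) v`. Then `y' = Ⅎ t y` for the continuous coefficient matrix
`Ⅎ = [[0, 1], [V - λ, 0]]`, so `y` solves a linear ODE on `[0, 1]` whose right-hand side is
uniformly Lipschitz there. If `y s = 0`, uniqueness of solutions, run backwards from `s`, gives
`y 0 = 0`, i.e. `α₂ᵀ v = 0` and `α₁ᵀ v = 0`, whence `v = 0` by the rank condition. -/

theorem linear_ODE_solution_eqOn_zero_Icc_left {E : Type*} [NormedAddCommGroup E]
    [NormedSpace ℝ E] {B : ℝ → E →L[ℝ] E} {y : ℝ → E} {a b s : ℝ}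
    (hB : ContinuousOn B (Icc a b))
    (hy : ∀ t ∈ Icc a b, HasDerivWithinAt y (B t (y t)) (Icc a b) t)
    (hs : s ∈ Icc a b) (hys : y s = 0) :
    EqOn y 0 (Icc a s) := by
  obtain ⟨K, hK⟩ := (isCompact_Icc.image_of_continuousOn
    (continuous_nnnorm.comp_continuousOn hB)).bddAbove
  have hsub : Icc a s ⊆ Icc a b := Icc_subset_Icc_right hs.2
  have hy' : ∀ t ∈ Ioc a s, HasDerivWithinAt y (B t (y t)) (Iic t) t := fun t ht =>
    ((hy t (hsub (Ioc_subset_Icc_self ht))).mono (Icc_subset_Icc_right (ht.2.trans hs.2)))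
      |>.mono_of_mem_nhdsWithin (Icc_mem_nhdsLE ht.1)
  refine ODE_solution_unique_of_mem_Icc_left (v := fun t => B t) (s := fun _ => univ) (K := K)
    (fun t ht => ((B t).lipschitz.weaken
      (hK (mem_image_of_mem _ (hsub (Ioc_subset_Icc_self ht))))).lipschitzOnWith)
    (HasDerivWithinAt.continuousOn fun t ht => (hy t (hsub ht)).mono hsub) hy'
    (fun _ _ => mem_univ _) continuousOn_const
    (fun t _ => by rw [Pi.zero_apply, map_zero]; exact hasDerivWithinAt_const t (Iic t) 0)
    (fun _ _ => mem_univ _) hys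

theorem linear_matrix_ODE_solution_eqOn_zero_Icc_left {ι : Type*} [Fintype ι] [DecidableEq ι]
    {M : ℝ → Matrix ι ι ℝ} {y : ℝ → ι → ℝ} {a b s : ℝ}
    (hM : ContinuousOn M (Icc a b))
    (hy : ∀ t ∈ Icc a b, HasDerivWithinAt y (M t *ᵥ y t) (Icc a b) t)
    (hs : s ∈ Icc a b) (hys : y s = 0) :
    EqOn y 0 (Icc a s) := by
  have hcont : Continuous fun A : Matrix ι ι ℝ => LinearMap.toContinuousLinearMap (toLin' A) :=
    LinearMap.continuous_of_finiteDimensional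
      ((LinearMap.toContinuousLinearMap : ((ι → ℝ) →ₗ[ℝ] ι → ℝ) ≃ₗ[ℝ] _).toLinearMap ∘ₗ
        (toLin' : Matrix ι ι ℝ ≃ₗ[ℝ] _).toLinearMap)
  exact linear_ODE_solution_eqOn_zero_Icc_left (hcont.comp_continuousOn hM) hy hs hys

section MatrixDeriv

variable {m n : Type*} {S : Set ℝ} {t : ℝ}

theorem hasDerivWithinAt_mulVec [Fintype n] {M : ℝ → Matrix m n ℝ} {M' : Matrix m n ℝ}
    (hM : ∀ i j, HasDerivWithinAt (fun τ => M τ i j) (M' i j) S t) (v : n → ℝ) :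
    HasDerivWithinAt (fun τ => M τ *ᵥ v) (M' *ᵥ v) S t :=
  hasDerivWithinAt_pi.2 fun i => by
    simpa only [mulVec, dotProduct] using
      HasDerivWithinAt.fun_sum (u := Finset.univ) fun j _ => (hM i j).mul_const (v j)

theorem hasDerivWithinAt_fromRows_apply {m' : Type*} {X : ℝ → Matrix m n ℝ}
    {Z : ℝ → Matrix m' n ℝ} {X' : Matrix m n ℝ} {Z' : Matrix m' n ℝ}
    (hX : ∀ i j, HasDerivWithinAt (fun τ => X τ i j) (X' i j) S t)
    (hZ : ∀ i j, HasDerivWithinAt (fun τ => Z τ i j) (Z' i j) S t) :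
    ∀ i j, HasDerivWithinAt (fun τ => fromRows (X τ) (Z τ) i j)
      (fromRows X' Z' i j) S t
  | .inl i, j => hX i j
  | .inr i, j => hZ i j

end MatrixDeriv

/-- If `X, Z` solve the first-order (shooting) system `X′ = Z`, `Z′ = (V − λI)X` on `[0,1]`
with `V` continuous, and the initial frame `(α₂ᵗ; −α₁ᵗ)` has rank `n` (i.e. `α₁ᵗv = 0` and
`α₂ᵗv = 0` imply `v = 0`), then the frame `(X(s); Z(s))` has rank `n` for every `s ∈ [0,1]`:
`X(s)v = 0` and `Z(s)v = 0` imply `v = 0`. -/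
theorem frame_has_full_rank (n : ℕ) (V : ℝ → Matrix (Fin n) (Fin n) ℝ) (lam : ℝ)
    (hVcont : ∀ i j, Continuous fun x => V x i j)
    (α₁ α₂ : Matrix (Fin n) (Fin n) ℝ)
    (hrank : ∀ v : Fin n → ℝ, α₁ᵀ *ᵥ v = 0 → α₂ᵀ *ᵥ v = 0 → v = 0)
    (X Z : ℝ → Matrix (Fin n) (Fin n) ℝ)
    (hX : ∀ s ∈ Set.Icc (0:ℝ) 1, ∀ i j,
      HasDerivWithinAt (fun t => X t i j) (Z s i j) (Set.Icc (0:ℝ) 1) s)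
    (hZ : ∀ s ∈ Set.Icc (0:ℝ) 1, ∀ i j,
      HasDerivWithinAt (fun t => Z t i j)
        (((V s - lam • (1 : Matrix (Fin n) (Fin n) ℝ)) * X s) i j) (Set.Icc (0:ℝ) 1) s)
    (hX0 : X 0 = α₂ᵀ) (hZ0 : Z 0 = -α₁ᵀ) :
    ∀ s ∈ Set.Icc (0:ℝ) 1, ∀ v : Fin n → ℝ,
      X s *ᵥ v = 0 → Z s *ᵥ v = 0 → v = 0 := by
  intro s hs v hXv hZv
  set Ⅎ : ℝ → Matrix (Fin n ⊕ Fin n) (Fin n ⊕ Fin n) ℝ :=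
    fun t => fromBlocks 0 1 (V t - lam • 1) 0
  have hℲ : Continuous Ⅎ :=
    continuous_const.matrix_fromBlocks continuous_const
      ((continuous_matrix hVcont).sub continuous_const) continuous_const
  have hframe : ∀ t ∈ Icc (0:ℝ) 1, HasDerivWithinAt (fun τ => fromRows (X τ) (Z τ) *ᵥ v)
      (Ⅎ t *ᵥ (fromRows (X t) (Z t) *ᵥ v)) (Icc 0 1) t := by
    intro t ht
    simp only [Ⅎ, mulVec_mulVec, fromBlocks_mul_fromRows, zero_mul, one_mul, zero_add, add_zero]
    exact hasDerivWithinAt_mulVec (hasDerivWithinAt_fromRows_apply (hX t ht) (hZ t ht)) v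
  have hvanish := linear_matrix_ODE_solution_eqOn_zero_Icc_left hℲ.continuousOn hframe hs
    (by simp only [fromRows_mulVec, hXv, hZv, Sum.elim_zero_zero]) (left_mem_Icc.2 hs.1)
  simp only [Pi.zero_apply, fromRows_mulVec, hX0, hZ0] at hvanish
  rw [← Sum.elim_zero_zero] at hvanish
  obtain ⟨hα₂, hα₁⟩ := Sum.elim_eq_iff.mp hvanish
  exact hrank v (by rwa [neg_mulVec, neg_eq_zero] at hα₁) hα₂
end

section
/- Let X, Z be real n×n matrices satisfying the Lagrangian frame conditions, let 𝕊 := (XᵗX + ZᵗZ)^{−1/2}, and let β₁, β₂ satisfy the β-conditions. Define the 2n×2n matrices 𝓧_D = [[X𝕊, −Z𝕊],[Z𝕊, X𝕊]] and 𝓑 = [[β₁, β₂],[−β₂, β₁]], and set Q = 𝓧_D𝓑. Then QᵗQ = QQᵗ = I_{2n}, QJ = JQ, and for every x ∈ ℝⁿ one has Q·(β₁ᵗx, β₂ᵗx)ᵀ = (Xy, Zy)ᵀ where y = 𝕊x; in particular Q maps the column span of the frame (β₁ᵗ; β₂ᵗ) onto the column span of the frame (X; Z). -/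
/-!
Normalising the Lagrangian frame by `𝕊 = S⁻¹` gives `A = X𝕊`, `B = Z𝕊` with `AᵀA + BᵀB = 1` and
`AᵀB = BᵀA`. These are exactly the conditions making the block matrix `[[A, -B],[B, A]]`
orthogonal; dually the β-conditions make `𝓑 = [[β₁, β₂],[-β₂, β₁]]` orthogonal. Both are real
forms of complex matrices, hence commute with `J`, and so does their product `Q`. Finally
`(β₁ᵗx, β₂ᵗx) = 𝓑ᵀ (x, 0)`, which `Q = 𝓧_D 𝓑` sends to `𝓧_D (x, 0) = (A x, B x)`.
-/

open Matrix

/-- The standard symplectic matrix `J = [[0, −Iₙ],[Iₙ, 0]]` on `ℝ^{2n}`. -/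
def Jmat (n : ℕ) : Matrix (Fin n ⊕ Fin n) (Fin n ⊕ Fin n) ℝ :=
  fromBlocks 0 (-1) 1 0

/-- The real form `[[a, b],[-b, a]]` of the complex matrix `a - i b`. -/
def complexBlock {n R : Type*} [Neg R] (a b : Matrix n n R) : Matrix (n ⊕ n) (n ⊕ n) R :=
  fromBlocks a b (-b) a

section complexBlock

variable {n R : Type*} [CommRing R] (a b : Matrix n n R)

theorem complexBlock_transpose : (complexBlock a b)ᵀ = complexBlock aᵀ (-bᵀ) := by
  simp [complexBlock, fromBlocks_transpose]

variable [Fintype n]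

theorem complexBlock_transpose_mulVec_inl (x : n → R) :
    (complexBlock a b)ᵀ *ᵥ Sum.elim x 0 = Sum.elim (aᵀ *ᵥ x) (bᵀ *ᵥ x) := by
  simp [complexBlock, fromBlocks_transpose, fromBlocks_mulVec]

variable [DecidableEq n]

theorem complexBlock_transpose_mul_self (h₁ : aᵀ * a + bᵀ * b = 1) (h₂ : aᵀ * b = bᵀ * a) :
    (complexBlock a b)ᵀ * complexBlock a b = 1 := by
  rw [complexBlock, fromBlocks_transpose, fromBlocks_multiply, ← fromBlocks_one]
  simp only [transpose_neg, Matrix.neg_mul, Matrix.mul_neg, neg_neg, h₂]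
  rw [add_comm (bᵀ * b), h₁, add_neg_cancel]

theorem complexBlock_mul_transpose_self (h₁ : a * aᵀ + b * bᵀ = 1) (h₂ : a * bᵀ = b * aᵀ) :
    complexBlock a b * (complexBlock a b)ᵀ = 1 := by
  have h := complexBlock_transpose_mul_self aᵀ (-bᵀ) (by simpa using h₁)
    (by simpa using congrArg Neg.neg h₂)
  rwa [← complexBlock_transpose, transpose_transpose] at h

end complexBlock

theorem complexBlock_mul_Jmat {n : ℕ} (a b : Matrix (Fin n) (Fin n) ℝ) :
    complexBlock a b * Jmat n = Jmat n * complexBlock a b := by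
  simp [complexBlock, Jmat, fromBlocks_multiply]

section LagrangianFrame

variable {m n R : Type*} [Fintype m] [Fintype n] [CommRing R]
  {X Z : Matrix m n R}

theorem transpose_mul_comm_of_mul_right (hfr : Xᵀ * Z = Zᵀ * X) (M : Matrix n n R) :
    (X * M)ᵀ * (Z * M) = (Z * M)ᵀ * (X * M) := by
  rw [transpose_mul, transpose_mul, Matrix.mul_assoc, Matrix.mul_assoc, ← Matrix.mul_assoc Xᵀ, hfr,
    ← Matrix.mul_assoc Zᵀ]

theorem gram_mul_inv_sqrt_eq_one [DecidableEq n] {S : Matrix n n R} (hSt : Sᵀ = S) (hdet : IsUnit S.det)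
    (hSsq : S * S = Xᵀ * X + Zᵀ * Z) :
    (X * S⁻¹)ᵀ * (X * S⁻¹) + (Z * S⁻¹)ᵀ * (Z * S⁻¹) = 1 := by
  have h : (X * S⁻¹)ᵀ * (X * S⁻¹) + (Z * S⁻¹)ᵀ * (Z * S⁻¹) = S⁻¹ * (S * S) * S⁻¹ := by
    simp only [hSsq, transpose_mul, transpose_nonsing_inv, hSt, Matrix.mul_add, Matrix.add_mul,
      Matrix.mul_assoc]
  rw [h, Matrix.mul_assoc, Matrix.mul_assoc, mul_nonsing_inv S hdet, Matrix.mul_one,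
    nonsing_inv_mul S hdet]

end LagrangianFrame

/-- Let `(X; Z)` be a Lagrangian frame, let `S` be the positive definite square root of
`𝕏 = XᵗX + ZᵗZ` (so `𝕊 = 𝕏^{−1/2} = S⁻¹`), and let `β₁, β₂` satisfy the β-conditions.
Then `Q = 𝓧_D 𝓑` (with `𝓧_D = [[X𝕊, −Z𝕊],[Z𝕊, X𝕊]]` and `𝓑 = [[β₁, β₂],[−β₂, β₁]]`)
is orthogonal, commutes with `J`, and maps the frame `(β₁ᵗ; β₂ᵗ)` onto the frame `(X; Z)`:
`Q (β₁ᵗx, β₂ᵗx)ᵀ = (Xy, Zy)ᵀ` with `y = 𝕊x`. -/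
theorem XD_times_B_unitary (n : ℕ) (X Z β₁ β₂ S : Matrix (Fin n) (Fin n) ℝ)
    (hfr : Xᵀ * Z = Zᵀ * X)
    (hβ1 : β₁ * β₂ᵀ = β₂ * β₁ᵀ) (hβ2 : β₁ * β₁ᵀ + β₂ * β₂ᵀ = 1)
    (hS : S.PosDef) (hSsq : S * S = Xᵀ * X + Zᵀ * Z)
    (Q : Matrix (Fin n ⊕ Fin n) (Fin n ⊕ Fin n) ℝ)
    (hQ : Q = fromBlocks (X * S⁻¹) (-(Z * S⁻¹)) (Z * S⁻¹) (X * S⁻¹) *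
      fromBlocks β₁ β₂ (-β₂) β₁) :
    Qᵀ * Q = 1 ∧ Q * Qᵀ = 1 ∧ Q * Jmat n = Jmat n * Q ∧
    ∀ x : Fin n → ℝ,
      Q *ᵥ Sum.elim (β₁ᵀ *ᵥ x) (β₂ᵀ *ᵥ x) =
        Sum.elim (X *ᵥ (S⁻¹ *ᵥ x)) (Z *ᵥ (S⁻¹ *ᵥ x)) := by
  set XD := complexBlock (X * S⁻¹) (-(Z * S⁻¹))
  set 𝓑 := complexBlock β₁ β₂
  have hQ' : Q = XD * 𝓑 := by rw [hQ, ← neg_neg (Z * S⁻¹)]; simp [XD, 𝓑, complexBlock]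
  have hSt : Sᵀ = S := hS.isHermitian.eq
  have hXD : XDᵀ * XD = 1 := complexBlock_transpose_mul_self _ _
    (by simpa using gram_mul_inv_sqrt_eq_one hSt hS.det_pos.ne'.isUnit hSsq)
    (by simpa using transpose_mul_comm_of_mul_right hfr S⁻¹)
  have h𝓑 : 𝓑 * 𝓑ᵀ = 1 := complexBlock_mul_transpose_self β₁ β₂ hβ2 hβ1
  have hQtQ : Qᵀ * Q = 1 := by
    rw [hQ', transpose_mul, Matrix.mul_assoc, ← Matrix.mul_assoc XDᵀ, hXD, Matrix.one_mul,
      mul_eq_one_comm.mp h𝓑]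
  refine ⟨hQtQ, mul_eq_one_comm.mp hQtQ, ?_, fun x => ?_⟩
  · rw [hQ', Matrix.mul_assoc, complexBlock_mul_Jmat, ← Matrix.mul_assoc, complexBlock_mul_Jmat,
      Matrix.mul_assoc]
  · rw [← complexBlock_transpose_mulVec_inl, hQ', mulVec_mulVec, Matrix.mul_assoc, h𝓑,
      Matrix.mul_one]
    simp [XD, complexBlock, fromBlocks_mulVec, mulVec_mulVec]
end

section
/- Let M_D be a real symmetric n×n matrix, set 𝕄 = Iₙ + M_D², and let 𝕄^{−1/2} be the inverse of the positive definite square root of 𝕄. Let β₁, β₂ satisfy the β-conditions. Define 𝓜_D = [[𝕄^{−1/2}, −𝕄^{−1/2}M_D],[𝕄^{−1/2}M_D, 𝕄^{−1/2}]] and 𝓑 = [[β₁, β₂],[−β₂, β₁]], and set U = 𝓜_D𝓑. Then UᵗU = UUᵗ = I_{2n} and UJ = JU. Moreover, if X, Z are real n×n matrices with X invertible, XᵗZ = ZᵗX and M_D = ZX⁻¹, then for every x ∈ ℝⁿ one has U·(β₁ᵗx, β₂ᵗx)ᵀ = (Xy, Zy)ᵀ with y = X⁻¹𝕄^{−1/2}x.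 -/
open Matrix

open scoped MatrixOrder ComplexOrder in
theorem Matrix.PosSemidef.commute_of_commute_mul_self {𝕜 m : Type*} [RCLike 𝕜] [Fintype m]
    [DecidableEq m] {S A : Matrix m m 𝕜} (hS : S.PosSemidef) (h : Commute (S * S) A) :
    Commute S A := by
  rw [← CFC.sqrt_mul_self S hS.nonneg, CFC.sqrt_eq_cfc]
  exact h.cfc_nnreal _

theorem Matrix.commute_nonsing_inv_right {m R : Type*} [Fintype m] [DecidableEq m] [CommRing R]
    {A B : Matrix m m R} (hB : IsUnit B) (h : Commute A B) : Commute A B⁻¹ := by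
  rw [← hB.unit_spec, ← coe_units_inv]
  exact (hB.unit_spec ▸ h).units_inv_right

section ComplexBlocks

variable {m R : Type*} [CommRing R]

def complexBlocks (A B : Matrix m m R) : Matrix (m ⊕ m) (m ⊕ m) R :=
  fromBlocks A (-B) B A

theorem Jmat_eq_complexBlocks (n : ℕ) : Jmat n = complexBlocks 0 1 := rfl

theorem commute_complexBlocks_zero_one [Fintype m] [DecidableEq m] (A B : Matrix m m R) :
    Commute (complexBlocks A B) (complexBlocks 0 1) := by
  simp [Commute, SemiconjBy, complexBlocks, fromBlocks_multiply]

theorem complexBlocks_mem_orthogonalGroup [Fintype m] [DecidableEq m] {A B : Matrix m m R}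
    (h₁ : A * Aᵀ + B * Bᵀ = 1) (h₂ : A * Bᵀ = B * Aᵀ) :
    complexBlocks A B ∈ orthogonalGroup (m ⊕ m) R := by
  rw [mem_orthogonalGroup_iff, complexBlocks, fromBlocks_transpose, fromBlocks_multiply,
    ← fromBlocks_one]
  congr 1
  · simpa using h₁
  · simp [h₂]
  · simp [h₂]
  · simpa [add_comm] using h₁

theorem complexBlocks_mulVec_inl [Fintype m] (A B : Matrix m m R) (x : m → R) :
    complexBlocks A B *ᵥ Sum.elim x 0 = Sum.elim (A *ᵥ x) (B *ᵥ x) := by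
  simp [complexBlocks, fromBlocks_mulVec]

theorem complexBlocks_transpose_mulVec_inl [Fintype m] (A B : Matrix m m R) (x : m → R) :
    (complexBlocks A B)ᵀ *ᵥ Sum.elim x 0 = Sum.elim (Aᵀ *ᵥ x) (-Bᵀ *ᵥ x) := by
  simp [complexBlocks, fromBlocks_transpose, fromBlocks_mulVec]

theorem complexBlocks_inv_inv_mul_mem_orthogonalGroup [Fintype m] [DecidableEq m]
    {T M : Matrix m m R} (hT : IsUnit T) (hTsymm : Tᵀ = T) (hM : Mᵀ = M)
    (hTsq : T * T = 1 + M * M) :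
    complexBlocks T⁻¹ (T⁻¹ * M) ∈ orthogonalGroup (m ⊕ m) R := by
  have hdet : IsUnit T.det := (isUnit_iff_isUnit_det T).mp hT
  have hTinv : T⁻¹ᵀ = T⁻¹ := by rw [transpose_nonsing_inv, hTsymm]
  apply complexBlocks_mem_orthogonalGroup
  · calc T⁻¹ * T⁻¹ᵀ + T⁻¹ * M * (T⁻¹ * M)ᵀ = T⁻¹ * (1 + M * M) * T⁻¹ := by
          rw [transpose_mul, hM, hTinv]; noncomm_ring
      _ = 1 := by rw [← hTsq, ← Matrix.mul_assoc, nonsing_inv_mul T hdet, Matrix.one_mul,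
          mul_nonsing_inv T hdet]
  · rw [transpose_mul, hM, hTinv, Matrix.mul_assoc]

end ComplexBlocks

/-- Let `M_D` be real symmetric, `𝕄 = I + M_D²`, `T` its positive definite square root
(so `𝕄^{−1/2} = T⁻¹`), and let `β₁, β₂` satisfy the β-conditions.  Then
`U = 𝓜_D 𝓑` (with `𝓜_D = [[𝕄^{−1/2}, −𝕄^{−1/2}M_D],[𝕄^{−1/2}M_D, 𝕄^{−1/2}]]` and
`𝓑 = [[β₁, β₂],[−β₂, β₁]]`) is orthogonal and commutes with `J`; moreover if `X` is
invertible, `XᵗZ = ZᵗX` and `M_D = ZX⁻¹`, then `U (β₁ᵗx, β₂ᵗx)ᵀ = (Xy, Zy)ᵀ` with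
`y = X⁻¹𝕄^{−1/2}x`. -/
theorem MD_times_B_unitary (n : ℕ) (M T β₁ β₂ : Matrix (Fin n) (Fin n) ℝ)
    (hM : Mᵀ = M)
    (hβ1 : β₁ * β₂ᵀ = β₂ * β₁ᵀ) (hβ2 : β₁ * β₁ᵀ + β₂ * β₂ᵀ = 1)
    (hT : T.PosDef) (hTsq : T * T = 1 + M * M)
    (U : Matrix (Fin n ⊕ Fin n) (Fin n ⊕ Fin n) ℝ)
    (hU : U = fromBlocks T⁻¹ (-(T⁻¹ * M)) (T⁻¹ * M) T⁻¹ * fromBlocks β₁ β₂ (-β₂) β₁) :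
    Uᵀ * U = 1 ∧ U * Uᵀ = 1 ∧ U * Jmat n = Jmat n * U ∧
    ∀ X Z : Matrix (Fin n) (Fin n) ℝ, IsUnit X → Xᵀ * Z = Zᵀ * X → M = Z * X⁻¹ →
      ∀ x : Fin n → ℝ,
        U *ᵥ Sum.elim (β₁ᵀ *ᵥ x) (β₂ᵀ *ᵥ x) =
          Sum.elim (X *ᵥ (X⁻¹ *ᵥ (T⁻¹ *ᵥ x))) (Z *ᵥ (X⁻¹ *ᵥ (T⁻¹ *ᵥ x))) := by
  have hTsymm : Tᵀ = T := (isHermitian_iff_isSymm.mp hT.isHermitian).eq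
  have hMD := complexBlocks_inv_inv_mul_mem_orthogonalGroup hT.isUnit hTsymm hM hTsq
  have hB : complexBlocks β₁ (-β₂) ∈ orthogonalGroup (Fin n ⊕ Fin n) ℝ :=
    complexBlocks_mem_orthogonalGroup (by simpa using hβ2) (by simpa using hβ1)
  replace hU : U = complexBlocks T⁻¹ (T⁻¹ * M) * complexBlocks β₁ (-β₂) := by
    rw [hU, complexBlocks, complexBlocks, neg_neg]
  have hUorth : U ∈ orthogonalGroup (Fin n ⊕ Fin n) ℝ := hU ▸ mul_mem hMD hB
  refine ⟨(mem_orthogonalGroup_iff' ..).mp hUorth, (mem_orthogonalGroup_iff ..).mp hUorth, ?_, ?_⟩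
  · rw [hU, Jmat_eq_complexBlocks]
    exact ((commute_complexBlocks_zero_one _ _).mul_left (commute_complexBlocks_zero_one _ _)).eq
  intro X Z hX _ hMZ x
  have hMT : Commute M T⁻¹ := by
    refine commute_nonsing_inv_right hT.isUnit (hT.posSemidef.commute_of_commute_mul_self ?_).symm
    rw [hTsq]
    exact (Commute.one_left M).add_left ((Commute.refl M).mul_left (Commute.refl M))
  have hv : Sum.elim (β₁ᵀ *ᵥ x) (β₂ᵀ *ᵥ x) = (complexBlocks β₁ (-β₂))ᵀ *ᵥ Sum.elim x 0 := by
    simp [complexBlocks_transpose_mulVec_inl]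
  rw [hv, hU, ← mulVec_mulVec, mulVec_mulVec _ (complexBlocks β₁ (-β₂)),
    (mem_orthogonalGroup_iff ..).mp hB, one_mulVec, complexBlocks_mulVec_inl]
  simp only [mulVec_mulVec]
  rw [mul_nonsing_inv_cancel_left _ _ ((isUnit_iff_isUnit_det X).mp hX), ← Matrix.mul_assoc, ← hMZ,
    hMT.eq]
end

section
/- Let β₁, β₂ satisfy the β-conditions, let M_D be a real symmetric n×n matrix, 𝕄 = Iₙ + M_D², and 𝕄^{−1/2} the inverse of the positive definite square root of 𝕄. Define 𝓜_D = [[𝕄^{−1/2}, −𝕄^{−1/2}M_D],[𝕄^{−1/2}M_D, 𝕄^{−1/2}]], 𝓑 = [[β₁, β₂],[−β₂, β₁]], Π₁ = [[β₂ᵗβ₂, −β₂ᵗβ₁],[−β₁ᵗβ₂, β₁ᵗβ₁]], τ₁ = 2Π₁ − I_{2n}, and 𝔅 = [[β₁ᵗβ₁ − β₂ᵗβ₂, 2β₂ᵗβ₁],[−2β₂ᵗβ₁, β₁ᵗβ₁ − β₂ᵗβ₂]]. Then 𝓑τ₁𝓑ᵗ = [[−Iₙ, 0],[0, Iₙ]],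 and the matrix W := (𝓜_D𝓑)τ₁(𝓜_D𝓑)ᵗτ₁ satisfies W = 𝓜_D²𝔅. -/
/-!
Write `J = [[−I, 0],[0, I]]`. The β-conditions say that `𝓑𝓑ᵗ = I`; then `𝓑ᵗ𝓑 = I` too, so
they also hold for `β₁ᵗ, β₂ᵗ`. With these, `τ₁ = 𝓑ᵗ J 𝓑`, which gives `𝓑 τ₁ 𝓑ᵗ = J`, and `𝔅 = J τ₁`.
The square root of `𝕄 = I + M_D²` is a continuous function of `𝕄`, so it commutes with `M_D`;
hence `J 𝓜_Dᵗ = 𝓜_D J`, and `W = 𝓜_D J 𝓜_Dᵗ τ₁ = 𝓜_D² J τ₁ = 𝓜_D² 𝔅`.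
-/

open Matrix

namespace Matrix

variable {m n R : Type*} [Fintype m] [Fintype n] [DecidableEq m] [DecidableEq n]

theorem commute_nonsing_inv_right_s11 [CommRing R] {A T : Matrix n n R} (h : Commute A T) :
    Commute A T⁻¹ := by
  by_cases hT : IsUnit T.det
  · exact h.units_inv_right (u := nonsingInvUnit T hT)
  · rw [nonsing_inv_apply_not_isUnit T hT]
    exact Commute.zero_right A

open scoped ComplexOrder MatrixOrder in
theorem PosSemidef.commute_of_commute_mul_self_s11 {𝕜 : Type*} [RCLike 𝕜] {A T : Matrix n n 𝕜}
    (hT : T.PosSemidef) (h : Commute A (T * T)) : Commute A T := by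
  rw [← CFC.sqrt_mul_self T hT.nonneg, CFC.sqrt_eq_cfc]
  exact (h.symm.cfc_nnreal _).symm

section Blocks

variable [CommRing R]

theorem fromBlocks_mul_transpose_eq_one {a b : Matrix n n R} (hab : a * bᵀ = b * aᵀ)
    (hsum : a * aᵀ + b * bᵀ = 1) : fromBlocks a b (-b) a * (fromBlocks a b (-b) a)ᵀ = 1 := by
  rw [fromBlocks_transpose, fromBlocks_multiply, ← fromBlocks_one]
  simp only [transpose_neg, mul_neg, neg_mul, neg_neg, hab, neg_add_cancel,
    add_comm (b * bᵀ), hsum]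

theorem transpose_mul_eq_and_add_eq_one {a b : Matrix n n R} (hab : a * bᵀ = b * aᵀ)
    (hsum : a * aᵀ + b * bᵀ = 1) : aᵀ * b = bᵀ * a ∧ aᵀ * a + bᵀ * b = 1 := by
  have h := mul_eq_one_comm.mp (fromBlocks_mul_transpose_eq_one hab hsum)
  rw [fromBlocks_transpose, fromBlocks_multiply, ← fromBlocks_one, fromBlocks_inj] at h
  obtain ⟨hdiag, hoff, -, -⟩ := h
  simp only [transpose_neg, neg_mul, mul_neg, neg_neg, ← sub_eq_add_neg] at hdiag hoff
  exact ⟨sub_eq_zero.mp hoff, hdiag⟩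

theorem two_smul_sub_one_eq_transpose_mul_mul {a b : Matrix n n R} (hab : aᵀ * b = bᵀ * a)
    (hsum : aᵀ * a + bᵀ * b = 1) :
    (2 : R) • fromBlocks (bᵀ * b) (-(bᵀ * a)) (-(aᵀ * b)) (aᵀ * a) - 1 =
      (fromBlocks a b (-b) a)ᵀ * fromBlocks (-1) 0 0 1 * fromBlocks a b (-b) a := by
  rw [fromBlocks_transpose, fromBlocks_multiply, fromBlocks_multiply, ← fromBlocks_one,
    fromBlocks_smul, sub_eq_add_neg, fromBlocks_neg, fromBlocks_add, fromBlocks_inj]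
  simp only [transpose_neg, mul_neg, neg_mul, mul_one, mul_zero, add_zero, zero_add, neg_neg,
    neg_zero, two_smul]
  rw [hab, ← hsum]
  refine ⟨?_, ?_, ?_, ?_⟩ <;> abel

theorem fromBlocks_neg_one_mul_two_smul_sub_one {a b : Matrix n n R} (hab : aᵀ * b = bᵀ * a)
    (hsum : aᵀ * a + bᵀ * b = 1) :
    fromBlocks (-1) 0 0 1 *
        ((2 : R) • fromBlocks (bᵀ * b) (-(bᵀ * a)) (-(aᵀ * b)) (aᵀ * a) - 1) =
      fromBlocks (aᵀ * a - bᵀ * b) ((2 : R) • (bᵀ * a)) (-((2 : R) • (bᵀ * a)))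
        (aᵀ * a - bᵀ * b) := by
  rw [← fromBlocks_one, fromBlocks_smul, sub_eq_add_neg, fromBlocks_neg, fromBlocks_add,
    fromBlocks_multiply, fromBlocks_inj]
  simp only [neg_mul, one_mul, zero_mul, add_zero, zero_add, neg_zero, two_smul]
  rw [hab, ← hsum]
  refine ⟨?_, ?_, ?_, ?_⟩ <;> abel

theorem fromBlocks_neg_one_mul_transpose {a : Matrix m m R} {b : Matrix m n R}
    {c : Matrix n m R} {d : Matrix n n R} (ha : aᵀ = a) (hb : bᵀ = -c) (hd : dᵀ = d) :
    fromBlocks (-1) 0 0 1 * (fromBlocks a b c d)ᵀ =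
      fromBlocks a b c d * fromBlocks (-1) 0 0 1 := by
  have hc : cᵀ = -b := by rw [← neg_eq_iff_eq_neg, ← transpose_neg, ← hb, transpose_transpose]
  simp [fromBlocks_transpose, fromBlocks_multiply, ha, hb, hc, hd]

end Blocks

end Matrix

/-- With `β₁, β₂` satisfying the β-conditions, `M_D` real symmetric, `T` the positive
definite square root of `𝕄 = I + M_D²` (so `𝕄^{−1/2} = T⁻¹`), and with
`𝓜_D = [[T⁻¹, −T⁻¹M_D],[T⁻¹M_D, T⁻¹]]`, `𝓑 = [[β₁, β₂],[−β₂, β₁]]`,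
`Π₁ = [[β₂ᵗβ₂, −β₂ᵗβ₁],[−β₁ᵗβ₂, β₁ᵗβ₁]]`, `τ₁ = 2Π₁ − I`, and
`𝔅 = [[β₁ᵗβ₁ − β₂ᵗβ₂, 2β₂ᵗβ₁],[−2β₂ᵗβ₁, β₁ᵗβ₁ − β₂ᵗβ₂]]`, one has
`𝓑 τ₁ 𝓑ᵗ = [[−I, 0],[0, I]]` and `W = (𝓜_D𝓑) τ₁ (𝓜_D𝓑)ᵗ τ₁ = 𝓜_D² 𝔅`. -/
theorem W_equals_MD_squared_times_frakB (n : ℕ) (M T β₁ β₂ : Matrix (Fin n) (Fin n) ℝ)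
    (hM : Mᵀ = M)
    (hβ1 : β₁ * β₂ᵀ = β₂ * β₁ᵀ) (hβ2 : β₁ * β₁ᵀ + β₂ * β₂ᵀ = 1)
    (hT : T.PosDef) (hTsq : T * T = 1 + M * M)
    (MD B Pi1 tau1 frakB : Matrix (Fin n ⊕ Fin n) (Fin n ⊕ Fin n) ℝ)
    (hMD : MD = fromBlocks T⁻¹ (-(T⁻¹ * M)) (T⁻¹ * M) T⁻¹)
    (hB : B = fromBlocks β₁ β₂ (-β₂) β₁)
    (hPi1 : Pi1 = fromBlocks (β₂ᵀ * β₂) (-(β₂ᵀ * β₁)) (-(β₁ᵀ * β₂)) (β₁ᵀ * β₁))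
    (htau1 : tau1 = (2 : ℝ) • Pi1 - 1)
    (hfrakB : frakB = fromBlocks (β₁ᵀ * β₁ - β₂ᵀ * β₂) ((2 : ℝ) • (β₂ᵀ * β₁))
      (-((2 : ℝ) • (β₂ᵀ * β₁))) (β₁ᵀ * β₁ - β₂ᵀ * β₂)) :
    B * tau1 * Bᵀ = fromBlocks (-1) 0 0 1 ∧
    (MD * B) * tau1 * (MD * B)ᵀ * tau1 = MD * MD * frakB := by
  set J : Matrix (Fin n ⊕ Fin n) (Fin n ⊕ Fin n) ℝ := fromBlocks (-1) 0 0 1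
  obtain ⟨hβ1t, hβ2t⟩ := transpose_mul_eq_and_add_eq_one hβ1 hβ2
  have hBBt : B * Bᵀ = 1 := hB ▸ fromBlocks_mul_transpose_eq_one hβ1 hβ2
  have htau : tau1 = Bᵀ * J * B := by
    rw [htau1, hPi1, hB, two_smul_sub_one_eq_transpose_mul_mul hβ1t hβ2t]
  have hfrak : frakB = J * tau1 := by
    rw [hfrakB, htau1, hPi1, fromBlocks_neg_one_mul_two_smul_sub_one hβ1t hβ2t]
  have hTinv : (T⁻¹)ᵀ = T⁻¹ := (isHermitian_iff_isSymm.mp hT.isHermitian.inv).eq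
  have hMTinv : Commute M T⁻¹ := commute_nonsing_inv_right_s11 <|
    hT.posSemidef.commute_of_commute_mul_self_s11 <| hTsq ▸ (Commute.one_right M).add_right
      ((Commute.refl M).mul_right (Commute.refl M))
  have hJMD : J * MDᵀ = MD * J := by
    rw [hMD]
    refine fromBlocks_neg_one_mul_transpose hTinv ?_ hTinv
    rw [transpose_neg, transpose_mul, hM, hTinv, hMTinv.eq]
  have hBtauBt : B * tau1 * Bᵀ = J := by
    calc B * tau1 * Bᵀ = (B * Bᵀ) * J * (B * Bᵀ) := by simp only [htau, Matrix.mul_assoc]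
      _ = J := by rw [hBBt, one_mul, mul_one]
  refine ⟨hBtauBt, ?_⟩
  calc (MD * B) * tau1 * (MD * B)ᵀ * tau1 = MD * (B * tau1 * Bᵀ) * MDᵀ * tau1 := by
        simp only [transpose_mul, Matrix.mul_assoc]
    _ = MD * MD * (J * tau1) := by
        rw [hBtauBt, Matrix.mul_assoc MD J, hJMD]
        simp only [Matrix.mul_assoc]
    _ = MD * MD * frakB := by rw [hfrak]
end

section
/- Let V : ℝ → Mat_{n×n}(ℝ) be continuous with V(x) symmetric for every x, and let λ ∈ ℝ. Suppose X, Z, Ẋ, Ż : [0,s] → Mat_{n×n}(ℝ) are differentiable and satisfy X′ = Z, Z′ = (V − λIₙ)X, Ẋ′ = Ż, Ż′ = (V − λIₙ)Ẋ − X on [0,s], with Ẋ(0) = 0 and Ż(0) = 0. Then d/dx (XᵗŻ − ZᵗẊ) = −XᵗX on [0,s], and consequently X(s)ᵗŻ(s) − Z(s)ᵗẊ(s) = −∫₀ˢ X(t)ᵗX(t) dt; in particular X(s)ᵗŻ(s) − Z(s)ᵗẊ(s) is symmetric negative semidefinite. -/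
/-!
With `A = V − λ`, the product rule gives `(XᵀŻ − ZᵀẊ)′ = ZᵀŻ + Xᵀ(AẊ − X) − (AX)ᵀẊ − ZᵀŻ`, and
the symmetry of `A` cancels the `A`-terms, leaving `−XᵀX`. The Wronskian vanishes at `0`, so the
fundamental theorem of calculus gives the integral formula, whence symmetry. For each `v` the
quadratic form `vᵀ(XᵀŻ − ZᵀẊ)v` has derivative `−|Xv|² ≤ 0`, so it decreases from its value `0`
at the origin.
-/

open Matrix Set

-- `Matrix` carries no global norm, so derivatives of matrix-valued functions are taken entrywise.
def HasEntrywiseDerivWithinAt {m n : Type*} (f : ℝ → Matrix m n ℝ) (f' : Matrix m n ℝ)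
    (s : Set ℝ) (x : ℝ) : Prop :=
  ∀ i j, HasDerivWithinAt (fun t => f t i j) (f' i j) s x

namespace HasEntrywiseDerivWithinAt

variable {l m n : Type*} {f g : ℝ → Matrix m n ℝ} {f' g' : Matrix m n ℝ} {s : Set ℝ} {x : ℝ}

theorem sub (hf : HasEntrywiseDerivWithinAt f f' s x) (hg : HasEntrywiseDerivWithinAt g g' s x) :
    HasEntrywiseDerivWithinAt (fun t => f t - g t) (f' - g') s x :=
  fun i j => (hf i j).sub (hg i j)

theorem transpose (hf : HasEntrywiseDerivWithinAt f f' s x) :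
    HasEntrywiseDerivWithinAt (fun t => (f t)ᵀ) f'ᵀ s x :=
  fun i j => hf j i

theorem mul [Fintype n] {g : ℝ → Matrix n l ℝ} {g' : Matrix n l ℝ}
    (hf : HasEntrywiseDerivWithinAt f f' s x) (hg : HasEntrywiseDerivWithinAt g g' s x) :
    HasEntrywiseDerivWithinAt (fun t => f t * g t) (f' * g x + f x * g') s x := by
  intro i k
  simp only [mul_apply, Matrix.add_apply, ← Finset.sum_add_distrib]
  exact HasDerivWithinAt.fun_sum fun j _ => (hf i j).fun_mul (hg j k)

theorem dotProduct_mulVec [Fintype m] [Fintype n] (hf : HasEntrywiseDerivWithinAt f f' s x)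
    (v : m → ℝ) (w : n → ℝ) :
    HasDerivWithinAt (fun t => v ⬝ᵥ f t *ᵥ w) (v ⬝ᵥ f' *ᵥ w) s x := by
  simp only [dotProduct, mulVec]
  exact HasDerivWithinAt.fun_sum fun i _ =>
    (HasDerivWithinAt.fun_sum fun j _ => (hf i j).mul_const (w j)).const_mul (v i)

end HasEntrywiseDerivWithinAt

section Interval

variable {m n : Type*} {a b : ℝ}

theorem integral_apply_eq_sub_of_hasEntrywiseDerivWithinAt {W W' : ℝ → Matrix m n ℝ}
    (hab : a ≤ b) (hW : ∀ x ∈ Icc a b, HasEntrywiseDerivWithinAt W (W' x) (Icc a b) x)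
    (hW' : ∀ i j, ContinuousOn (fun t => W' t i j) (Icc a b)) (i : m) (j : n) :
    ∫ t in a..b, W' t i j = W b i j - W a i j := by
  refine intervalIntegral.integral_eq_sub_of_hasDerivAt_of_le hab
    (fun x hx => (hW x hx i j).continuousWithinAt) (fun x hx => ?_) ?_
  · exact (hW x (Ioo_subset_Icc_self hx) i j).hasDerivAt (Icc_mem_nhds hx.1 hx.2)
  · exact ((hW' i j).mono (uIcc_of_le hab).subset).intervalIntegrable

theorem antitoneOn_dotProduct_mulVec_of_hasEntrywiseDerivWithinAt [Fintype n]
    {W W' : ℝ → Matrix n n ℝ} (hW : ∀ x ∈ Icc a b, HasEntrywiseDerivWithinAt W (W' x) (Icc a b) x)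
    (hW' : ∀ x ∈ Icc a b, (-W' x).PosSemidef) (v : n → ℝ) :
    AntitoneOn (fun t => v ⬝ᵥ W t *ᵥ v) (Icc a b) := by
  refine antitoneOn_of_hasDerivWithinAt_nonpos (f' := fun x => v ⬝ᵥ W' x *ᵥ v) (convex_Icc a b)
    (fun x hx => ((hW x hx).dotProduct_mulVec v v).continuousWithinAt) (fun x hx => ?_)
    (fun x hx => ?_)
  all_goals rw [interior_Icc] at hx
  · rw [interior_Icc]
    exact ((hW x (Ioo_subset_Icc_self hx)).dotProduct_mulVec v v).mono Ioo_subset_Icc_self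
  · simpa [neg_mulVec] using (hW' x (Ioo_subset_Icc_self hx)).dotProduct_mulVec_nonneg v

end Interval

theorem hasEntrywiseDerivWithinAt_wronskian {m n : Type*} [Fintype m] {A : Matrix m m ℝ}
    (hA : Aᵀ = A) {X Z Xd Zd : ℝ → Matrix m n ℝ} {s : Set ℝ} {x : ℝ}
    (hX : HasEntrywiseDerivWithinAt X (Z x) s x)
    (hZ : HasEntrywiseDerivWithinAt Z (A * X x) s x)
    (hXd : HasEntrywiseDerivWithinAt Xd (Zd x) s x)
    (hZd : HasEntrywiseDerivWithinAt Zd (A * Xd x - X x) s x) :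
    HasEntrywiseDerivWithinAt (fun t => (X t)ᵀ * Zd t - (Z t)ᵀ * Xd t) (-((X x)ᵀ * X x)) s x := by
  convert (hX.transpose.mul hZd).sub (hZ.transpose.mul hXd) using 1
  simp only [transpose_mul, hA, Matrix.mul_sub, Matrix.mul_assoc]
  abel

theorem lambda_derivative_identity_general (n : ℕ) (V : ℝ → Matrix (Fin n) (Fin n) ℝ)
    (lam s : ℝ) (hs : 0 ≤ s)
    (hVsym : ∀ x, (V x)ᵀ = V x)
    (X Z Xd Zd : ℝ → Matrix (Fin n) (Fin n) ℝ)
    (hX : ∀ x ∈ Set.Icc (0:ℝ) s, ∀ i j,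
      HasDerivWithinAt (fun t => X t i j) (Z x i j) (Set.Icc (0:ℝ) s) x)
    (hZ : ∀ x ∈ Set.Icc (0:ℝ) s, ∀ i j,
      HasDerivWithinAt (fun t => Z t i j)
        (((V x - lam • (1 : Matrix (Fin n) (Fin n) ℝ)) * X x) i j) (Set.Icc (0:ℝ) s) x)
    (hXd : ∀ x ∈ Set.Icc (0:ℝ) s, ∀ i j,
      HasDerivWithinAt (fun t => Xd t i j) (Zd x i j) (Set.Icc (0:ℝ) s) x)
    (hZd : ∀ x ∈ Set.Icc (0:ℝ) s, ∀ i j,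
      HasDerivWithinAt (fun t => Zd t i j)
        (((V x - lam • (1 : Matrix (Fin n) (Fin n) ℝ)) * Xd x - X x) i j)
        (Set.Icc (0:ℝ) s) x)
    (hXd0 : Xd 0 = 0) (hZd0 : Zd 0 = 0) :
    (∀ x ∈ Set.Icc (0:ℝ) s, ∀ i j,
      HasDerivWithinAt (fun t => ((X t)ᵀ * Zd t - (Z t)ᵀ * Xd t) i j)
        ((-((X x)ᵀ * X x)) i j) (Set.Icc (0:ℝ) s) x) ∧
    (∀ i j, ((X s)ᵀ * Zd s - (Z s)ᵀ * Xd s) i j = -∫ t in (0:ℝ)..s, ((X t)ᵀ * X t) i j) ∧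
    ((X s)ᵀ * Zd s - (Z s)ᵀ * Xd s)ᵀ = (X s)ᵀ * Zd s - (Z s)ᵀ * Xd s ∧
    (-((X s)ᵀ * Zd s - (Z s)ᵀ * Xd s)).PosSemidef := by
  have hderiv : ∀ x ∈ Icc 0 s, HasEntrywiseDerivWithinAt
      (fun t => (X t)ᵀ * Zd t - (Z t)ᵀ * Xd t) (-((X x)ᵀ * X x)) (Icc 0 s) x :=
    fun x hx => hasEntrywiseDerivWithinAt_wronskian (by simp [hVsym])
      (hX x hx) (hZ x hx) (hXd x hx) (hZd x hx)
  have hW0 : (X 0)ᵀ * Zd 0 - (Z 0)ᵀ * Xd 0 = 0 := by simp [hXd0, hZd0]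
  have hcont : ∀ i j, ContinuousOn (fun t => (-((X t)ᵀ * X t)) i j) (Icc 0 s) := fun i j x hx =>
    ((HasEntrywiseDerivWithinAt.transpose (hX x hx)).mul (hX x hx) i j).continuousWithinAt.neg
  have hint : ∀ i j, ((X s)ᵀ * Zd s - (Z s)ᵀ * Xd s) i j
      = -∫ t in (0:ℝ)..s, ((X t)ᵀ * X t) i j := fun i j => by
    have hftc := integral_apply_eq_sub_of_hasEntrywiseDerivWithinAt hs hderiv hcont i j
    rw [hW0, Matrix.zero_apply, sub_zero] at hftc
    rw [← hftc]
    simp only [Matrix.neg_apply, intervalIntegral.integral_neg]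
  have hsymm : ((X s)ᵀ * Zd s - (Z s)ᵀ * Xd s)ᵀ = (X s)ᵀ * Zd s - (Z s)ᵀ * Xd s := by
    ext i j
    rw [transpose_apply, hint, hint]
    congr 2 with t
    rw [← transpose_apply ((X t)ᵀ * X t), transpose_mul, transpose_transpose]
  refine ⟨hderiv, hint, hsymm, .of_dotProduct_mulVec_nonneg ?_ fun v => ?_⟩
  · simpa [IsHermitian] using congrArg Neg.neg hsymm
  · have hanti := antitoneOn_dotProduct_mulVec_of_hasEntrywiseDerivWithinAt hderiv
      (fun x _ => by simpa using posSemidef_conjTranspose_mul_self (X x)) v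
    rw [star_trivial, neg_mulVec, dotProduct_neg, neg_nonneg]
    simpa [hW0] using hanti (left_mem_Icc.2 hs) (right_mem_Icc.2 hs) hs

/-- Let `X, Z` solve the shooting system `X′ = Z`, `Z′ = (V − λI)X` on `[0, s]` and let
`Ẋ, Ż` solve the variational system `Ẋ′ = Ż`, `Ż′ = (V − λI)Ẋ − X` with
`Ẋ(0) = Ż(0) = 0`.  Then `(XᵗŻ − ZᵗẊ)′ = −XᵗX` on `[0, s]`, hence
`X(s)ᵗŻ(s) − Z(s)ᵗẊ(s) = −∫₀ˢ X(t)ᵗX(t) dt` is symmetric negative semidefinite. -/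
theorem lambda_derivative_identity (n : ℕ) (V : ℝ → Matrix (Fin n) (Fin n) ℝ)
    (lam s : ℝ) (hs : 0 ≤ s)
    (hVcont : ∀ i j, Continuous fun x => V x i j)
    (hVsym : ∀ x, (V x)ᵀ = V x)
    (X Z Xd Zd : ℝ → Matrix (Fin n) (Fin n) ℝ)
    (hX : ∀ x ∈ Set.Icc (0:ℝ) s, ∀ i j,
      HasDerivWithinAt (fun t => X t i j) (Z x i j) (Set.Icc (0:ℝ) s) x)
    (hZ : ∀ x ∈ Set.Icc (0:ℝ) s, ∀ i j,
      HasDerivWithinAt (fun t => Z t i j)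
        (((V x - lam • (1 : Matrix (Fin n) (Fin n) ℝ)) * X x) i j) (Set.Icc (0:ℝ) s) x)
    (hXd : ∀ x ∈ Set.Icc (0:ℝ) s, ∀ i j,
      HasDerivWithinAt (fun t => Xd t i j) (Zd x i j) (Set.Icc (0:ℝ) s) x)
    (hZd : ∀ x ∈ Set.Icc (0:ℝ) s, ∀ i j,
      HasDerivWithinAt (fun t => Zd t i j)
        (((V x - lam • (1 : Matrix (Fin n) (Fin n) ℝ)) * Xd x - X x) i j)
        (Set.Icc (0:ℝ) s) x)
    (hXd0 : Xd 0 = 0) (hZd0 : Zd 0 = 0) :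
    (∀ x ∈ Set.Icc (0:ℝ) s, ∀ i j,
      HasDerivWithinAt (fun t => ((X t)ᵀ * Zd t - (Z t)ᵀ * Xd t) i j)
        ((-((X x)ᵀ * X x)) i j) (Set.Icc (0:ℝ) s) x) ∧
    (∀ i j, ((X s)ᵀ * Zd s - (Z s)ᵀ * Xd s) i j = -∫ t in (0:ℝ)..s, ((X t)ᵀ * X t) i j) ∧
    ((X s)ᵀ * Zd s - (Z s)ᵀ * Xd s)ᵀ = (X s)ᵀ * Zd s - (Z s)ᵀ * Xd s ∧
    (-((X s)ᵀ * Zd s - (Z s)ᵀ * Xd s)).PosSemidef :=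
  lambda_derivative_identity_general n V lam s hs hVsym X Z Xd Zd hX hZ hXd hZd hXd0 hZd0
end

section
/- Let V : ℝ → Mat_{n×n}(ℝ) be continuous with V(s) symmetric for all s, let λ ∈ ℝ, and let X, Z : [0,1] → Mat_{n×n}(ℝ) be differentiable with X′(s) = Z(s) and Z′(s) = (V(s) − λIₙ)X(s), and suppose that for every s the Lagrangian frame conditions hold: X(s)ᵗZ(s) = Z(s)ᵗX(s) and X(s)ᵗX(s) + Z(s)ᵗZ(s) is invertible. Let 𝔅̃ be a constant complex unitary n×n matrix and define W̃(s) = (X(s) + iZ(s))(X(s) − iZ(s))^{−1}𝔅̃. Then W̃ is differentiable and satisfies dW̃/ds = iW̃(s)Ω̃(s), where Ω̃(s) = 2((X(s) − iZ(s))^{−1}𝔅̃)* [X(s)ᵗ(V(s) − λIₙ)X(s) − Z(s)ᵗZ(s)] ((X(s) − iZ(s))^{−1}𝔅̃) is Hermitian. -/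
/-!
For a Lagrangian frame the cross terms cancel in `(X ∓ iZ)ᴴ(X ∓ iZ) = XᵀX + ZᵀZ`, so `M = X − iZ`
is invertible and `U = N M⁻¹` with `N = X + iZ` is unitary. The quotient rule gives
`W' = (N' − U M') M⁻¹B`; inserting `U Uᴴ = 1` and `B Bᴴ = 1` rewrites this as
`W (M⁻¹B)ᴴ (Nᴴ N' − Mᴴ M') M⁻¹B`, and the middle factor is the complexified Wronskian
`2i (XᵀZ' − ZᵀX') = 2i (Xᵀ(V − λ)X − ZᵀZ)`, Hermitian because `V` is symmetric.
-/

open Matrix Complex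

-- Only the topology matters for the statements; a normed-algebra norm gives the product and
-- inverse rules.
attribute [local instance] Matrix.linftyOpNormedAddCommGroup Matrix.linftyOpNormedRing
  Matrix.linftyOpNormedAlgebra

theorem hasDerivWithinAt_matrix_iff {𝕜 E : Type*} [NontriviallyNormedField 𝕜]
    [NormedAddCommGroup E] [NormedSpace 𝕜 E] {m n : Type*} [Fintype m] [Fintype n]
    {f : 𝕜 → Matrix m n E} {f' : Matrix m n E} {S : Set 𝕜} {x : 𝕜} :
    HasDerivWithinAt f f' S x ↔ ∀ i j, HasDerivWithinAt (fun t => f t i j) (f' i j) S x := by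
  have h := hasDerivWithinAt_pi (φ := fun t => (f t : m → n → E)) (φ' := (f' : m → n → E))
    (s := S) (x := x)
  simp only [hasDerivWithinAt_pi] at h
  exact h

theorem HasDerivWithinAt.matrix_map_ofReal {m n : Type*} [Fintype m] [Fintype n]
    {f : ℝ → Matrix m n ℝ} {f' : Matrix m n ℝ} {S : Set ℝ} {x : ℝ}
    (h : HasDerivWithinAt f f' S x) :
    HasDerivWithinAt (fun t => (f t).map ofReal) (f'.map ofReal) S x :=
  hasDerivWithinAt_matrix_iff.2 fun i j => (hasDerivWithinAt_matrix_iff.1 h i j).ofReal_comp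

section MatrixCalculus

variable {𝕜 ι : Type*} [RCLike 𝕜] [Fintype ι] [DecidableEq ι]
  {M N : ℝ → Matrix ι ι 𝕜} {M' N' : Matrix ι ι 𝕜} {S : Set ℝ} {x : ℝ}

theorem HasDerivWithinAt.matrix_inv (h : HasDerivWithinAt M M' S x) (hx : IsUnit (M x)) :
    HasDerivWithinAt (fun t => (M t)⁻¹) (-((M x)⁻¹ * M' * (M x)⁻¹)) S x := by
  obtain ⟨u, hu⟩ := hx
  have hinv := hasFDerivAt_ringInverse (𝕜 := ℝ) u
  rw [hu] at hinv
  have h' := hinv.comp_hasDerivWithinAt x h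
  simp only [Function.comp_def, ← nonsing_inv_eq_ringInverse] at h'
  refine h'.congr_deriv ?_
  simp [← hu, coe_units_inv]

theorem HasDerivWithinAt.mul_nonsing_inv_mul (hN : HasDerivWithinAt N N' S x)
    (hM : HasDerivWithinAt M M' S x) (hx : IsUnit (M x)) (B : Matrix ι ι 𝕜) :
    HasDerivWithinAt (fun t => N t * (M t)⁻¹ * B)
      ((N' - N x * (M x)⁻¹ * M') * ((M x)⁻¹ * B)) S x := by
  refine ((hN.mul (hM.matrix_inv hx)).mul_const B).congr_deriv ?_
  noncomm_ring

end MatrixCalculus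

section Complexification

variable {l m n : Type*}

theorem conjTranspose_map_ofReal (x : Matrix l m ℝ) : (x.map ofReal)ᴴ = xᵀ.map ofReal := by
  ext; simp

theorem conjTranspose_map_ofReal_add_I_smul (x z : Matrix l m ℝ) :
    (x.map ofReal + I • z.map ofReal)ᴴ = xᵀ.map ofReal - I • zᵀ.map ofReal := by
  simp [conjTranspose_map_ofReal, sub_eq_add_neg]

variable [Fintype l]

theorem map_ofReal_mul (x : Matrix m l ℝ) (y : Matrix l n ℝ) :
    (x * y).map ofReal = x.map ofReal * y.map ofReal :=
  Matrix.map_mul (f := ofRealHom)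

theorem conjTranspose_add_I_smul_mul_add_I_smul (x z : Matrix l m ℝ) (x' z' : Matrix l n ℝ) :
    (x.map ofReal + I • z.map ofReal)ᴴ * (x'.map ofReal + I • z'.map ofReal)
      = (xᵀ * x' + zᵀ * z').map ofReal + I • (xᵀ * z' - zᵀ * x').map ofReal := by
  simp only [conjTranspose_map_ofReal_add_I_smul, Matrix.sub_mul, Matrix.mul_add, Matrix.smul_mul,
    Matrix.mul_smul, smul_smul, I_mul_I, neg_one_smul, map_ofReal_mul, Matrix.map_add _ ofReal_add,
    Matrix.map_sub _ ofReal_sub, smul_sub]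
  abel

theorem conjTranspose_sub_I_smul_mul_sub_I_smul (x z : Matrix l m ℝ) (x' z' : Matrix l n ℝ) :
    (x.map ofReal - I • z.map ofReal)ᴴ * (x'.map ofReal - I • z'.map ofReal)
      = (xᵀ * x' + zᵀ * z').map ofReal - I • (xᵀ * z' - zᵀ * x').map ofReal := by
  have h := conjTranspose_add_I_smul_mul_add_I_smul x (-z) x' (-z')
  simp only [Matrix.map_neg _ ofReal_neg, smul_neg, ← sub_eq_add_neg, transpose_neg, Matrix.neg_mul,
    Matrix.mul_neg, neg_neg] at h
  rw [h, sub_eq_add_neg _ (I • _), ← smul_neg, ← Matrix.map_neg _ ofReal_neg, neg_sub,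
    sub_neg_eq_add, neg_add_eq_sub]

theorem conjTranspose_add_I_smul_mul_sub_conjTranspose_sub_I_smul_mul (x z : Matrix l m ℝ)
    (x' z' : Matrix l n ℝ) :
    (x.map ofReal + I • z.map ofReal)ᴴ * (x'.map ofReal + I • z'.map ofReal)
      - (x.map ofReal - I • z.map ofReal)ᴴ * (x'.map ofReal - I • z'.map ofReal)
      = (2 * I) • (xᵀ * z' - zᵀ * x').map ofReal := by
  rw [conjTranspose_add_I_smul_mul_add_I_smul, conjTranspose_sub_I_smul_mul_sub_I_smul]
  module

theorem conjTranspose_sub_I_smul_mul_self_of_transpose_mul_comm {x z : Matrix l m ℝ}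
    (h : xᵀ * z = zᵀ * x) :
    (x.map ofReal - I • z.map ofReal)ᴴ * (x.map ofReal - I • z.map ofReal)
      = (xᵀ * x + zᵀ * z).map ofReal := by
  rw [conjTranspose_sub_I_smul_mul_sub_I_smul, h, sub_self, Matrix.map_zero _ ofReal_zero,
    smul_zero, sub_zero]

theorem conjTranspose_add_I_smul_mul_self_of_transpose_mul_comm {x z : Matrix l m ℝ}
    (h : xᵀ * z = zᵀ * x) :
    (x.map ofReal + I • z.map ofReal)ᴴ * (x.map ofReal + I • z.map ofReal)
      = (xᵀ * x + zᵀ * z).map ofReal := by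
  rw [conjTranspose_add_I_smul_mul_add_I_smul, h, sub_self, Matrix.map_zero _ ofReal_zero,
    smul_zero, add_zero]

theorem isHermitian_map_ofReal_transpose_mul_mul_sub {A : Matrix l l ℝ} (hA : Aᵀ = A)
    (x z : Matrix l m ℝ) : ((xᵀ * A * x - zᵀ * z).map ofReal).IsHermitian := by
  refine IsHermitian.map ?_ _ fun r => (conj_ofReal r).symm
  rw [isHermitian_iff_isSymm]
  exact IsSymm.sub (by simp [IsSymm, Matrix.mul_assoc, hA]) (by simp [IsSymm])

end Complexification

section Unitary

variable {ι 𝕜 : Type*} [Fintype ι] [DecidableEq ι] [Field 𝕜] [StarRing 𝕜]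

theorem mul_nonsing_inv_mem_unitaryGroup {M N : Matrix ι ι 𝕜} (hM : IsUnit M.det)
    (h : Mᴴ * M = Nᴴ * N) : N * M⁻¹ ∈ unitaryGroup ι 𝕜 := by
  rw [mem_unitaryGroup_iff', star_eq_conjTranspose]
  calc (N * M⁻¹)ᴴ * (N * M⁻¹) = (M * M⁻¹)ᴴ * (M * M⁻¹) := by
        simp only [conjTranspose_mul, Matrix.mul_assoc, ← Matrix.mul_assoc Nᴴ, ← h]
    _ = 1 := by rw [mul_nonsing_inv M hM, conjTranspose_one, one_mul]

theorem sub_mul_nonsing_inv_mul_eq_of_mem_unitaryGroup {M N M' N' B : Matrix ι ι 𝕜}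
    (hM : IsUnit M.det) (hU : N * M⁻¹ ∈ unitaryGroup ι 𝕜) (hB : B ∈ unitaryGroup ι 𝕜) :
    (N' - N * M⁻¹ * M') * (M⁻¹ * B)
      = N * M⁻¹ * B * ((M⁻¹ * B)ᴴ * (Nᴴ * N' - Mᴴ * M') * (M⁻¹ * B)) := by
  have hU' : N * M⁻¹ * (M⁻¹ᴴ * Nᴴ) = 1 := by
    simpa [star_eq_conjTranspose] using Unitary.mul_star_self_of_mem hU
  have hM' : M⁻¹ᴴ * Mᴴ = 1 := by
    rw [← conjTranspose_mul, mul_nonsing_inv M hM, conjTranspose_one]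
  have hB' : B * Bᴴ = 1 := Unitary.mul_star_self_of_mem hB
  calc (N' - N * M⁻¹ * M') * (M⁻¹ * B)
      = (N * M⁻¹ * (M⁻¹ᴴ * Nᴴ) * N' - N * M⁻¹ * (M⁻¹ᴴ * Mᴴ) * M') * (M⁻¹ * B) := by
        rw [hU', hM', one_mul, Matrix.mul_one]
    _ = N * M⁻¹ * (B * Bᴴ) * (M⁻¹ᴴ * (Nᴴ * N' - Mᴴ * M') * (M⁻¹ * B)) := by
        rw [hB']; noncomm_ring
    _ = N * M⁻¹ * B * ((M⁻¹ * B)ᴴ * (Nᴴ * N' - Mᴴ * M') * (M⁻¹ * B)) := by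
        rw [conjTranspose_mul]; noncomm_ring

end Unitary

section Cayley

variable {ι : Type*} [Fintype ι] [DecidableEq ι] {x z : ℝ → Matrix ι ι ℝ}
  {x' z' : Matrix ι ι ℝ} {S : Set ℝ} {s : ℝ}

theorem HasDerivWithinAt.cayley (hx : HasDerivWithinAt x x' S s) (hz : HasDerivWithinAt z z' S s)
    (hxz : (x s)ᵀ * z s = (z s)ᵀ * x s) (hG : IsUnit ((x s)ᵀ * x s + (z s)ᵀ * z s))
    {B : Matrix ι ι ℂ} (hB : B ∈ unitaryGroup ι ℂ) :
    HasDerivWithinAt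
      (fun t => ((x t).map ofReal + I • (z t).map ofReal) *
        ((x t).map ofReal - I • (z t).map ofReal)⁻¹ * B)
      (I • (((x s).map ofReal + I • (z s).map ofReal) *
          ((x s).map ofReal - I • (z s).map ofReal)⁻¹ * B *
        (2 : ℂ) • ((((x s).map ofReal - I • (z s).map ofReal)⁻¹ * B)ᴴ *
          ((x s)ᵀ * z' - (z s)ᵀ * x').map ofReal *
          (((x s).map ofReal - I • (z s).map ofReal)⁻¹ * B)))) S s := by
  have hMM := conjTranspose_sub_I_smul_mul_self_of_transpose_mul_comm hxz
  have hM : IsUnit ((x s).map ofReal - I • (z s).map ofReal) := by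
    refine isUnit_of_mul_isUnit_right (x := ((x s).map ofReal - I • (z s).map ofReal)ᴴ) ?_
    rw [hMM]
    exact hG.map ofRealHom.mapMatrix
  have hMdet := (isUnit_iff_isUnit_det _).1 hM
  have hU := mul_nonsing_inv_mem_unitaryGroup hMdet
    (hMM.trans (conjTranspose_add_I_smul_mul_self_of_transpose_mul_comm hxz).symm)
  have hMd : HasDerivWithinAt (fun t => (x t).map ofReal - I • (z t).map ofReal)
      (x'.map ofReal - I • z'.map ofReal) S s :=
    hx.matrix_map_ofReal.sub (hz.matrix_map_ofReal.const_smul I)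
  have hNd : HasDerivWithinAt (fun t => (x t).map ofReal + I • (z t).map ofReal)
      (x'.map ofReal + I • z'.map ofReal) S s :=
    hx.matrix_map_ofReal.add (hz.matrix_map_ofReal.const_smul I)
  refine (hNd.mul_nonsing_inv_mul hMd hM B).congr_deriv ?_
  rw [sub_mul_nonsing_inv_mul_eq_of_mem_unitaryGroup hMdet hU hB,
    conjTranspose_add_I_smul_mul_sub_conjTranspose_sub_I_smul_mul]
  simp only [Matrix.mul_smul, Matrix.smul_mul, smul_smul, mul_comm I]

end Cayley

theorem Wtilde_s_derivative_general (n : ℕ) (V : ℝ → Matrix (Fin n) (Fin n) ℝ) (lam : ℝ)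
    (hVsym : ∀ x, (V x)ᵀ = V x)
    (X Z : ℝ → Matrix (Fin n) (Fin n) ℝ)
    (hX : ∀ s ∈ Set.Icc (0:ℝ) 1, ∀ i j,
      HasDerivWithinAt (fun t => X t i j) (Z s i j) (Set.Icc (0:ℝ) 1) s)
    (hZ : ∀ s ∈ Set.Icc (0:ℝ) 1, ∀ i j,
      HasDerivWithinAt (fun t => Z t i j)
        (((V s - lam • (1 : Matrix (Fin n) (Fin n) ℝ)) * X s) i j) (Set.Icc (0:ℝ) 1) s)
    (hlag : ∀ s ∈ Set.Icc (0:ℝ) 1,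
      (X s)ᵀ * Z s = (Z s)ᵀ * X s ∧ IsUnit ((X s)ᵀ * X s + (Z s)ᵀ * Z s))
    (B : Matrix (Fin n) (Fin n) ℂ) (hB2 : B * Bᴴ = 1)
    (Xc Zc W Om : ℝ → Matrix (Fin n) (Fin n) ℂ)
    (hXc : ∀ s, Xc s = (X s).map Complex.ofReal)
    (hZc : ∀ s, Zc s = (Z s).map Complex.ofReal)
    (hW : ∀ s, W s = (Xc s + Complex.I • Zc s) * (Xc s - Complex.I • Zc s)⁻¹ * B)
    (hOm : ∀ s, Om s = (2 : ℂ) •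
      (((Xc s - Complex.I • Zc s)⁻¹ * B)ᴴ *
        (((X s)ᵀ * (V s - lam • (1 : Matrix (Fin n) (Fin n) ℝ)) * X s
          - (Z s)ᵀ * Z s).map Complex.ofReal) *
        ((Xc s - Complex.I • Zc s)⁻¹ * B))) :
    ∀ s ∈ Set.Icc (0:ℝ) 1,
      (∀ i j, HasDerivWithinAt (fun t => W t i j)
        ((Complex.I • (W s * Om s)) i j) (Set.Icc (0:ℝ) 1) s) ∧
      (Om s)ᴴ = Om s := by
  intro s hs
  obtain ⟨hXZ, hG⟩ := hlag s hs
  have hWd := (hasDerivWithinAt_matrix_iff.2 (hX s hs)).cayley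
    (hasDerivWithinAt_matrix_iff.2 (hZ s hs)) hXZ hG (mem_unitaryGroup_iff.2 hB2)
  simp only [← hXc, ← hZc, ← hW] at hWd
  refine ⟨hasDerivWithinAt_matrix_iff.1 (hWd.congr_deriv ?_), ?_⟩
  · rw [hOm, hW, Matrix.mul_assoc (X s)ᵀ]
  · rw [hOm]
    exact (isHermitian_conjTranspose_mul_mul _
      (isHermitian_map_ofReal_transpose_mul_mul_sub (by simp [hVsym]) _ _)).smul
      (IsSelfAdjoint.ofNat 2)

/-- Let `X, Z` solve the shooting system `X′ = Z`, `Z′ = (V − λI)X` on `[0,1]` with `V`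
continuous symmetric, suppose the Lagrangian frame conditions hold for every `s`, and let
`𝔅̃` be a constant complex unitary matrix.  Then `W̃(s) = (X + iZ)(X − iZ)⁻¹𝔅̃` is
differentiable with `dW̃/ds = iW̃Ω̃`, where
`Ω̃ = 2((X − iZ)⁻¹𝔅̃)* [Xᵗ(V − λI)X − ZᵗZ] ((X − iZ)⁻¹𝔅̃)` is Hermitian. -/
theorem Wtilde_s_derivative (n : ℕ) (V : ℝ → Matrix (Fin n) (Fin n) ℝ) (lam : ℝ)
    (hVcont : ∀ i j, Continuous fun x => V x i j)
    (hVsym : ∀ x, (V x)ᵀ = V x)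
    (X Z : ℝ → Matrix (Fin n) (Fin n) ℝ)
    (hX : ∀ s ∈ Set.Icc (0:ℝ) 1, ∀ i j,
      HasDerivWithinAt (fun t => X t i j) (Z s i j) (Set.Icc (0:ℝ) 1) s)
    (hZ : ∀ s ∈ Set.Icc (0:ℝ) 1, ∀ i j,
      HasDerivWithinAt (fun t => Z t i j)
        (((V s - lam • (1 : Matrix (Fin n) (Fin n) ℝ)) * X s) i j) (Set.Icc (0:ℝ) 1) s)
    (hlag : ∀ s ∈ Set.Icc (0:ℝ) 1,
      (X s)ᵀ * Z s = (Z s)ᵀ * X s ∧ IsUnit ((X s)ᵀ * X s + (Z s)ᵀ * Z s))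
    (B : Matrix (Fin n) (Fin n) ℂ) (hB1 : Bᴴ * B = 1) (hB2 : B * Bᴴ = 1)
    (Xc Zc W Om : ℝ → Matrix (Fin n) (Fin n) ℂ)
    (hXc : ∀ s, Xc s = (X s).map Complex.ofReal)
    (hZc : ∀ s, Zc s = (Z s).map Complex.ofReal)
    (hW : ∀ s, W s = (Xc s + Complex.I • Zc s) * (Xc s - Complex.I • Zc s)⁻¹ * B)
    (hOm : ∀ s, Om s = (2 : ℂ) •
      (((Xc s - Complex.I • Zc s)⁻¹ * B)ᴴ *
        (((X s)ᵀ * (V s - lam • (1 : Matrix (Fin n) (Fin n) ℝ)) * X s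
          - (Z s)ᵀ * Z s).map Complex.ofReal) *
        ((Xc s - Complex.I • Zc s)⁻¹ * B))) :
    ∀ s ∈ Set.Icc (0:ℝ) 1,
      (∀ i j, HasDerivWithinAt (fun t => W t i j)
        ((Complex.I • (W s * Om s)) i j) (Set.Icc (0:ℝ) 1) s) ∧
      (Om s)ᴴ = Om s :=
  Wtilde_s_derivative_general n V lam hVsym X Z hX hZ hlag B hB2 Xc Zc W Om hXc hZc hW hOm
end

section
/- Let W : ℝ → Mat_{n×n}(ℂ) be differentiable at τ₀, with W(τ) unitary for all τ in a neighborhood of τ₀, and suppose W′(τ₀) = iW(τ₀)Ω where Ω is Hermitian and negative definite. Let θ ∈ ℝ be such that e^{iθ} is not an eigenvalue of W(τ₀), and define A(τ) = i(e^{iθ}I − W(τ))^{−1}(e^{iθ}I + W(τ)) for τ near τ₀. Then A(τ₀) is Hermitian, A is differentiable at τ₀, and A′(τ₀) = ((e^{iθ}I − W(τ₀))^{−1})* (2Ω) (e^{iθ}I − W(τ₀))^{−1}; in particular A′(τ₀) is Hermitian and negative definite. -/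
/-!
Put `B = (e^{iθ} - W(τ₀))⁻¹`. From `B (e^{iθ} - W) = 1` one gets `B W = e^{iθ} B - 1`, so
`A = i (2 e^{iθ} B - 1)`; and unitarity of `W(τ₀)` with `|e^{iθ}| = 1` gives `Bᴴ = -e^{iθ} B W(τ₀)`,
which makes `A(τ₀)` Hermitian. Differentiating `B` via `d(M⁻¹) = -M⁻¹ dM M⁻¹` yields
`A′ = 2 i e^{iθ} B W′ B`, and inserting `W′ = i W Ω` and the formula for `Bᴴ` turns this into
`2 Bᴴ Ω B`, a congruence of `2 Ω` by an invertible matrix, hence negative definite.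
-/

open Matrix
open scoped ComplexOrder

theorem Matrix.hasDerivAt_iff {𝕜 m n α : Type*} [NontriviallyNormedField 𝕜] [Fintype m]
    [Fintype n] [NormedAddCommGroup α] [NormedSpace 𝕜 α] {f : 𝕜 → Matrix m n α}
    {f' : Matrix m n α} {x : 𝕜} :
    HasDerivAt f f' x ↔ ∀ i j, HasDerivAt (fun t => f t i j) (f' i j) x :=
  hasDerivAt_pi.trans (forall_congr' fun _ => hasDerivAt_pi)

theorem HasDerivAt.ringInverse {𝕜 R : Type*} [NontriviallyNormedField 𝕜] [NormedRing R]
    [HasSummableGeomSeries R] [NormedAlgebra 𝕜 R] {M : 𝕜 → R} {M' : R} {x : 𝕜}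
    (hM : HasDerivAt M M' x) (hx : IsUnit (M x)) :
    HasDerivAt (fun t => Ring.inverse (M t))
      (-(Ring.inverse (M x) * M' * Ring.inverse (M x))) x := by
  obtain ⟨u, hu⟩ := hx
  have h := hasFDerivAt_ringInverse (𝕜 := 𝕜) u
  rw [hu] at h
  rw [← hu, Ring.inverse_unit]
  exact h.comp_hasDerivAt x hM

namespace Matrix

variable {n : Type*} [Fintype n] [DecidableEq n]

theorem inv_smul_one_sub_mul_self {α : Type*} [CommRing α] {u : α} {W : Matrix n n α}
    (h : IsUnit (u • 1 - W)) : (u • 1 - W)⁻¹ * W = u • (u • 1 - W)⁻¹ - 1 := by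
  have hinv : (u • 1 - W)⁻¹ * (u • 1 - W) = 1 :=
    nonsing_inv_mul _ ((isUnit_iff_isUnit_det _).mp h)
  calc (u • 1 - W)⁻¹ * W = (u • 1 - W)⁻¹ * (u • 1) - (u • 1 - W)⁻¹ * (u • 1 - W) := by
        rw [← mul_sub, sub_sub_cancel]
    _ = u • (u • 1 - W)⁻¹ - 1 := by rw [hinv, Matrix.mul_smul, mul_one]

theorem conjTranspose_inv_smul_one_sub {K : Type*} [Field K] [StarRing K] {u : K}
    {W : Matrix n n K} (hu : star u * u = 1) (hW : Wᴴ * W = 1) (h : IsUnit (u • 1 - W)) :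
    ((u • 1 - W)⁻¹)ᴴ = -u • ((u • 1 - W)⁻¹ * W) := by
  have hWW : W * Wᴴ = 1 := mul_eq_one_comm.mp hW
  rw [conjTranspose_nonsing_inv]
  refine inv_eq_left_inv ?_
  rw [conjTranspose_sub, conjTranspose_smul, conjTranspose_one, mul_sub, Matrix.mul_smul,
    mul_one, Matrix.smul_mul, mul_assoc, hWW, mul_one, smul_smul, inv_smul_one_sub_mul_self h,
    mul_neg, hu]
  module

open Complex

noncomputable def cayleyTransform (u : ℂ) (W : Matrix n n ℂ) : Matrix n n ℂ :=
  I • ((u • 1 - W)⁻¹ * (u • 1 + W))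

variable {u : ℂ}

theorem cayleyTransform_eq {W : Matrix n n ℂ} (h : IsUnit (u • 1 - W)) :
    cayleyTransform u W = I • ((2 * u) • (u • 1 - W)⁻¹ - 1) := by
  rw [cayleyTransform, mul_add, Matrix.mul_smul, mul_one, inv_smul_one_sub_mul_self h]
  module

theorem isHermitian_cayleyTransform {W : Matrix n n ℂ} (hu : star u * u = 1) (hW : Wᴴ * W = 1)
    (h : IsUnit (u • 1 - W)) : (cayleyTransform u W).IsHermitian := by
  have hstar : star (2 * u) * u = 2 := by rw [star_mul', star_ofNat, mul_assoc, hu, mul_one]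
  rw [IsHermitian, cayleyTransform_eq h, conjTranspose_smul, conjTranspose_sub,
    conjTranspose_smul, conjTranspose_one, conjTranspose_inv_smul_one_sub hu hW h,
    inv_smul_one_sub_mul_self h, smul_smul, mul_neg, hstar, Complex.star_def, conj_I]
  module

open scoped Matrix.Norms.Operator in
theorem hasDerivAt_cayleyTransform {W : ℝ → Matrix n n ℂ} {W' : Matrix n n ℂ} {x : ℝ}
    (hW : HasDerivAt W W' x) (h : IsUnit (u • 1 - W x)) :
    HasDerivAt (fun t => cayleyTransform u (W t))
      ((2 * u * I) • ((u • 1 - W x)⁻¹ * W' * (u • 1 - W x)⁻¹)) x := by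
  set B := (u • 1 - W x)⁻¹
  have hB : HasDerivAt (fun t => (u • 1 - W t)⁻¹) (B * W' * B) x := by
    have := (hW.const_sub (u • 1)).ringInverse h
    simp only [← nonsing_inv_eq_ringInverse, mul_neg, neg_mul, neg_neg] at this
    -- the operator-norm topology is the product topology only up to unfolding, so not `simpa`
    exact this
  refine ((hB.mul (hW.const_add (u • 1))).const_smul I).congr_deriv ?_
  rw [mul_assoc (B * W'), mul_add B, Matrix.mul_smul, mul_one, inv_smul_one_sub_mul_self h]
  simp only [mul_add, mul_sub, Matrix.mul_smul, mul_one]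
  module

theorem hasDerivAt_cayleyTransform_of_unitary {W : ℝ → Matrix n n ℂ} {Ω : Matrix n n ℂ}
    {x : ℝ} (hu : star u * u = 1) (hWx : (W x)ᴴ * W x = 1)
    (hW : HasDerivAt W (I • (W x * Ω)) x) (h : IsUnit (u • 1 - W x)) :
    HasDerivAt (fun t => cayleyTransform u (W t))
      (((u • 1 - W x)⁻¹)ᴴ * ((2 : ℂ) • Ω) * (u • 1 - W x)⁻¹) x := by
  convert hasDerivAt_cayleyTransform hW h using 1
  rw [conjTranspose_inv_smul_one_sub hu hWx h]
  simp only [Matrix.smul_mul, Matrix.mul_smul, smul_smul, mul_assoc]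
  congr 1
  linear_combination -(2 * u) * I_mul_I

end Matrix

theorem cayley_transform_clockwise_general (n : ℕ) (W : ℝ → Matrix (Fin n) (Fin n) ℂ)
    (τ₀ θ : ℝ) (Om : Matrix (Fin n) (Fin n) ℂ)
    (hunit : ∀ᶠ τ in nhds τ₀, (W τ)ᴴ * W τ = 1 ∧ W τ * (W τ)ᴴ = 1)
    (hderiv : ∀ i j, HasDerivAt (fun τ => W τ i j) ((Complex.I • (W τ₀ * Om)) i j) τ₀)
    (hneg : (-Om).PosDef)
    (heig : Complex.exp (θ * Complex.I) ∉ spectrum ℂ (W τ₀))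
    (A : ℝ → Matrix (Fin n) (Fin n) ℂ)
    (hA : ∀ τ, A τ = Complex.I •
      ((Complex.exp (θ * Complex.I) • (1 : Matrix (Fin n) (Fin n) ℂ) - W τ)⁻¹ *
        (Complex.exp (θ * Complex.I) • (1 : Matrix (Fin n) (Fin n) ℂ) + W τ))) :
    (A τ₀)ᴴ = A τ₀ ∧
    (∀ i j, HasDerivAt (fun τ => A τ i j)
      ((((Complex.exp (θ * Complex.I) • (1 : Matrix (Fin n) (Fin n) ℂ) - W τ₀)⁻¹)ᴴ *
        ((2 : ℂ) • Om) *
        (Complex.exp (θ * Complex.I) • (1 : Matrix (Fin n) (Fin n) ℂ) - W τ₀)⁻¹) i j) τ₀) ∧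
    ((((Complex.exp (θ * Complex.I) • (1 : Matrix (Fin n) (Fin n) ℂ) - W τ₀)⁻¹)ᴴ *
        ((2 : ℂ) • Om) *
        (Complex.exp (θ * Complex.I) • (1 : Matrix (Fin n) (Fin n) ℂ) - W τ₀)⁻¹)ᴴ =
      (((Complex.exp (θ * Complex.I) • (1 : Matrix (Fin n) (Fin n) ℂ) - W τ₀)⁻¹)ᴴ *
        ((2 : ℂ) • Om) *
        (Complex.exp (θ * Complex.I) • (1 : Matrix (Fin n) (Fin n) ℂ) - W τ₀)⁻¹)) ∧
    (-((((Complex.exp (θ * Complex.I) • (1 : Matrix (Fin n) (Fin n) ℂ) - W τ₀)⁻¹)ᴴ *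
        ((2 : ℂ) • Om) *
        (Complex.exp (θ * Complex.I) • (1 : Matrix (Fin n) (Fin n) ℂ) - W τ₀)⁻¹))).PosDef := by
  set u := Complex.exp (θ * Complex.I)
  set B := (u • (1 : Matrix (Fin n) (Fin n) ℂ) - W τ₀)⁻¹
  have hu : star u * u = 1 := by
    rw [Complex.star_def, Complex.conj_mul', Complex.norm_exp_ofReal_mul_I]
    norm_num
  have hM : IsUnit (u • 1 - W τ₀) := by
    simpa [Algebra.algebraMap_eq_smul_one] using spectrum.notMem_iff.mp heig
  have hW₀ : (W τ₀)ᴴ * W τ₀ = 1 := hunit.self_of_nhds.1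
  have hnegDeriv : (-(Bᴴ * ((2 : ℂ) • Om) * B)).PosDef := by
    rw [← Matrix.neg_mul, ← Matrix.mul_neg, ← smul_neg]
    exact (hneg.smul two_pos).conjTranspose_mul_mul_same
      (mulVec_injective_iff_isUnit.mpr (isUnit_nonsing_inv_iff.mpr hM))
  obtain rfl : A = fun τ => cayleyTransform u (W τ) := funext hA
  exact ⟨isHermitian_cayleyTransform hu hW₀ hM,
    Matrix.hasDerivAt_iff.mp <| hasDerivAt_cayleyTransform_of_unitary hu hW₀
      (Matrix.hasDerivAt_iff.mpr hderiv) hM,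
    by simpa only [neg_neg] using hnegDeriv.isHermitian.neg.eq, hnegDeriv⟩

/-- Let `W(τ)` be a family of unitary matrices near `τ₀`, differentiable at `τ₀` with
`W′(τ₀) = iW(τ₀)Ω` for `Ω` Hermitian negative definite, and let `e^{iθ}` not be an
eigenvalue of `W(τ₀)`.  Then the Cayley transform
`A(τ) = i(e^{iθ}I − W(τ))⁻¹(e^{iθ}I + W(τ))` is Hermitian at `τ₀`, differentiable at `τ₀`,
and `A′(τ₀) = ((e^{iθ}I − W(τ₀))⁻¹)* (2Ω) (e^{iθ}I − W(τ₀))⁻¹` is Hermitian and negative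
definite. -/
theorem cayley_transform_clockwise (n : ℕ) (W : ℝ → Matrix (Fin n) (Fin n) ℂ)
    (τ₀ θ : ℝ) (Om : Matrix (Fin n) (Fin n) ℂ)
    (hunit : ∀ᶠ τ in nhds τ₀, (W τ)ᴴ * W τ = 1 ∧ W τ * (W τ)ᴴ = 1)
    (hderiv : ∀ i j, HasDerivAt (fun τ => W τ i j) ((Complex.I • (W τ₀ * Om)) i j) τ₀)
    (hOm : Omᴴ = Om) (hneg : (-Om).PosDef)
    (heig : Complex.exp (θ * Complex.I) ∉ spectrum ℂ (W τ₀))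
    (A : ℝ → Matrix (Fin n) (Fin n) ℂ)
    (hA : ∀ τ, A τ = Complex.I •
      ((Complex.exp (θ * Complex.I) • (1 : Matrix (Fin n) (Fin n) ℂ) - W τ)⁻¹ *
        (Complex.exp (θ * Complex.I) • (1 : Matrix (Fin n) (Fin n) ℂ) + W τ))) :
    (A τ₀)ᴴ = A τ₀ ∧
    (∀ i j, HasDerivAt (fun τ => A τ i j)
      ((((Complex.exp (θ * Complex.I) • (1 : Matrix (Fin n) (Fin n) ℂ) - W τ₀)⁻¹)ᴴ *
        ((2 : ℂ) • Om) *
        (Complex.exp (θ * Complex.I) • (1 : Matrix (Fin n) (Fin n) ℂ) - W τ₀)⁻¹) i j) τ₀) ∧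
    ((((Complex.exp (θ * Complex.I) • (1 : Matrix (Fin n) (Fin n) ℂ) - W τ₀)⁻¹)ᴴ *
        ((2 : ℂ) • Om) *
        (Complex.exp (θ * Complex.I) • (1 : Matrix (Fin n) (Fin n) ℂ) - W τ₀)⁻¹)ᴴ =
      (((Complex.exp (θ * Complex.I) • (1 : Matrix (Fin n) (Fin n) ℂ) - W τ₀)⁻¹)ᴴ *
        ((2 : ℂ) • Om) *
        (Complex.exp (θ * Complex.I) • (1 : Matrix (Fin n) (Fin n) ℂ) - W τ₀)⁻¹)) ∧
    (-((((Complex.exp (θ * Complex.I) • (1 : Matrix (Fin n) (Fin n) ℂ) - W τ₀)⁻¹)ᴴ *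
        ((2 : ℂ) • Om) *
        (Complex.exp (θ * Complex.I) • (1 : Matrix (Fin n) (Fin n) ℂ) - W τ₀)⁻¹))).PosDef :=
  cayley_transform_clockwise_general n W τ₀ θ Om hunit hderiv hneg heig A hA
end
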